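/- arXiv:1912.05441 — 7 statements merged into one kernel-verified Lean document; each statement's English description precedes it below -/
import Mathlib

section
/- Let A be symmetric positive semidefinite n×n, C an m×n matrix with full row rank such that Ker(A) ∩ Ker(C) = {0}, and let K = [[A, Cᵀ], [C, 0]] (which is invertible). Then the (2,2) block of K⁻¹ is symmetric negative semidefinite. -/
/-!
Write `K = [[A, Cᵀ], [C, 0]]` and let `Q`, `S` be the (1,2) and (2,2) blocks of `K⁻¹`. From
`K K⁻¹ = 1` we get `C Q = 1` and `A Q + Cᵀ S = 0`, hence `S = (C Q)ᵀ S = Qᵀ (Cᵀ S) = -Qᵀ A Q`,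
so `-S` is positive semidefinite. `K` is invertible because `K (x, w) = 0` forces `C x = 0` and
then `xᵀ A x = -xᵀ Cᵀ w = 0`, so `A x = 0`, `x = 0`, and finally `w = 0` since `Cᵀ` is injective.
-/
namespace Matrix

variable {ι κ : Type*} [Fintype κ]

theorem mulVec_injective_of_rank_eq_card {K : Type*} [Field K] {M : Matrix ι κ K}
    (h : M.rank = Fintype.card κ) : Function.Injective M.mulVec := by
  have hnull := LinearMap.finrank_range_add_finrank_ker M.mulVecLin
  rw [← rank, h, Module.finrank_fintype_fun_eq_card, add_eq_left,
    Submodule.finrank_eq_zero] at hnull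
  exact LinearMap.ker_eq_bot.mp hnull

variable [Fintype ι]

theorem toBlocks₂₂_eq_neg_of_fromBlocks_transpose_mul_eq_one {R : Type*} [CommRing R]
    [DecidableEq ι] [DecidableEq κ] {A : Matrix ι ι R} {C : Matrix κ ι R}
    {M : Matrix (ι ⊕ κ) (ι ⊕ κ) R} (hM : fromBlocks A Cᵀ C 0 * M = 1) :
    M.toBlocks₂₂ = -(M.toBlocks₁₂ᵀ * A * M.toBlocks₁₂) := by
  rw [← fromBlocks_toBlocks M, fromBlocks_multiply, ← fromBlocks_one, fromBlocks_inj] at hM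
  obtain ⟨-, hAQ, -, hCQ⟩ := hM
  simp only [Matrix.zero_mul, add_zero] at hAQ hCQ
  calc M.toBlocks₂₂ = (C * M.toBlocks₁₂)ᵀ * M.toBlocks₂₂ := by
        rw [hCQ, transpose_one, Matrix.one_mul]
    _ = M.toBlocks₁₂ᵀ * (Cᵀ * M.toBlocks₂₂) := by rw [transpose_mul, Matrix.mul_assoc]
    _ = -(M.toBlocks₁₂ᵀ * A * M.toBlocks₁₂) := by
      rw [eq_neg_of_add_eq_zero_right hAQ, Matrix.mul_neg, Matrix.mul_assoc]

theorem mulVec_injective_fromBlocks_transpose {A : Matrix ι ι ℝ} (hA : A.PosSemidef)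
    {C : Matrix κ ι ℝ} (hC : Function.Injective Cᵀ.mulVec)
    (hker : ∀ x, A *ᵥ x = 0 → C *ᵥ x = 0 → x = 0) :
    Function.Injective (fromBlocks A Cᵀ C 0).mulVec := by
  rw [← coe_mulVecLin, injective_iff_map_eq_zero]
  intro v hv
  obtain ⟨x, w, rfl⟩ : ∃ x w, v = Sum.elim x w := ⟨_, _, (Sum.elim_comp_inl_inr v).symm⟩
  rw [mulVecLin_apply, fromBlocks_mulVec, ← Sum.elim_zero_zero, Sum.elim_eq_iff,
    Sum.elim_comp_inl, Sum.elim_comp_inr, zero_mulVec, add_zero] at hv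
  obtain ⟨hAw, hCx⟩ := hv
  have hxAx : x ⬝ᵥ A *ᵥ x = 0 := by
    have hxCw : x ⬝ᵥ Cᵀ *ᵥ w = 0 := by
      rw [dotProduct_mulVec, vecMul_transpose, hCx, zero_dotProduct]
    simpa only [dotProduct_add, hxCw, add_zero, dotProduct_zero] using congrArg (x ⬝ᵥ ·) hAw
  have hx : x = 0 := hker x ((hA.dotProduct_mulVec_zero_iff x).mp hxAx) hCx
  have hw : w = 0 := hC <| by rwa [hx, mulVec_zero, zero_add, ← mulVec_zero Cᵀ] at hAw
  rw [hx, hw, Sum.elim_zero_zero]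

theorem posSemidef_neg_toBlocks₂₂_inv_fromBlocks_transpose [DecidableEq ι] [DecidableEq κ]
    {A : Matrix ι ι ℝ} (hA : A.PosSemidef) (C : Matrix κ ι ℝ)
    (hK : IsUnit (fromBlocks A Cᵀ C 0).det) :
    (-(fromBlocks A Cᵀ C 0)⁻¹.toBlocks₂₂).PosSemidef := by
  rw [toBlocks₂₂_eq_neg_of_fromBlocks_transpose_mul_eq_one (mul_nonsing_inv _ hK), neg_neg,
    ← conjTranspose_eq_transpose_of_trivial]
  exact hA.conjTranspose_mul_mul_same _

end Matrix

open Matrix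

theorem stmt2 {n m : ℕ}
    (A : Matrix (Fin n) (Fin n) ℝ) (hA : A.PosSemidef)
    (C : Matrix (Fin m) (Fin n) ℝ) (hC : C.rank = m)
    (hker : ∀ x : Fin n → ℝ, A.mulVec x = 0 → C.mulVec x = 0 → x = 0) :
    (-(Matrix.fromBlocks A Cᵀ C (0 : Matrix (Fin m) (Fin m) ℝ))⁻¹.toBlocks₂₂).PosSemidef := by
  have hCt : Function.Injective Cᵀ.mulVec :=
    mulVec_injective_of_rank_eq_card (by rw [rank_transpose, hC, Fintype.card_fin])
  have hK := mulVec_injective_fromBlocks_transpose hA hCt hker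
  exact posSemidef_neg_toBlocks₂₂_inv_fromBlocks_transpose hA C
    ((isUnit_iff_isUnit_det _).mp (mulVec_injective_iff_isUnit.mp hK))
end

section
/- Let V and W be finite-dimensional real inner product spaces with inner products induced by SPD matrices A (on V) and 𝒜 (on W). Suppose Π : W → V and I : V → W are linear maps such that Π ∘ I = id_V and Iᵀ 𝒜 I = A. If there exist positive constants α, β with α⁻¹ ⟨𝒜 w, w⟩ ≤ ⟨ℬ w, w⟩ ≤ β ⟨𝒜 w, w⟩ for all w in a subspace W̃ ⊆ W containing Range(I), ℬ being SPD on W̃, and Π is continuous on W̃ in the sense ⟨A Π w, Π w⟩ ≤ c ⟨𝒜 w, w⟩ for all w ∈ W̃ with constant c > 0, then the fictitious space preconditioner B̂⁻¹ := Π ℬ⁻¹ Πᵀ (with ℬ⁻¹ the inverse of ℬ on W̃) satisfies the spectral equivalence: ⟨B̂ v, v⟩ ≤ β ⟨A v, v⟩ and ⟨A v, v⟩ ≤ c α ⟨B̂ v, v⟩ for all v ∈ V. -/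
/-!
Write `M = Π ℬ⁻¹ Πᵀ` and `w = ℬ⁻¹ Πᵀ v`, so that `⟨M v, v⟩ = ⟨ℬ w, w⟩`. Both bounds are
Cauchy–Schwarz estimates: pairing `A⁻¹ v` with `Π w` in the `A`-inner product, continuity of `Π`
and `𝒜 ≤ α ℬ` give `M ≤ c α A⁻¹`; pairing `w` with the lift `I A⁻¹ v` in the `ℬ`-inner product,
energy stability and `ℬ ≤ β 𝒜` give `A⁻¹ ≤ β M`. Inversion reverses the order of positive
definite matrices, which turns these into the bounds for `B̂ = M⁻¹`. The one structural input
is that `ℬ⁻¹`, a right inverse of `ℬ` on the finite-dimensional space `W̃`, is a left inverse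
there too.
-/

open Matrix

namespace Matrix

variable {ι : Type*} [Fintype ι]

lemma IsSymm.dotProduct_mulVec_comm {X : Matrix ι ι ℝ} (hX : X.IsSymm) (a b : ι → ℝ) :
    a ⬝ᵥ X *ᵥ b = b ⬝ᵥ X *ᵥ a := by
  conv_lhs => rw [← hX.eq]
  exact dotProduct_transpose_mulVec X a b

lemma dotProduct_mulVec_mul_le_of_nonneg_on {X : Matrix ι ι ℝ} {S : Submodule ℝ (ι → ℝ)}
    (hS : ∀ x ∈ S, 0 ≤ x ⬝ᵥ X *ᵥ x) {a b : ι → ℝ} (ha : a ∈ S) (hb : b ∈ S) :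
    (a ⬝ᵥ X *ᵥ b) * (b ⬝ᵥ X *ᵥ a) ≤ (a ⬝ᵥ X *ᵥ a) * (b ⬝ᵥ X *ᵥ b) := by
  classical
  simpa [toLinearMap₂'_apply'] using
    (LinearMap.BilinForm.restrict (toLinearMap₂' ℝ X) S).apply_mul_apply_le_of_forall_zero_le
      (fun x => by simpa [toLinearMap₂'_apply'] using hS x x.2) ⟨a, ha⟩ ⟨b, hb⟩

lemma dotProduct_mulVec_le_mul_of_le_mul {X : Matrix ι ι ℝ} (hX : X.IsSymm)
    {S : Submodule ℝ (ι → ℝ)} (hS : ∀ x ∈ S, 0 ≤ x ⬝ᵥ X *ᵥ x) {a b : ι → ℝ} (ha : a ∈ S)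
    (hb : b ∈ S) {t : ℝ} (ht : 0 ≤ t) (h : b ⬝ᵥ X *ᵥ b ≤ t * (a ⬝ᵥ X *ᵥ b)) :
    a ⬝ᵥ X *ᵥ b ≤ t * (a ⬝ᵥ X *ᵥ a) := by
  have cs := dotProduct_mulVec_mul_le_of_nonneg_on hS ha hb
  rw [hX.dotProduct_mulVec_comm b a] at cs
  have haa := hS a ha
  rcases le_or_gt (a ⬝ᵥ X *ᵥ b) 0 with hs | hs
  · exact hs.trans (mul_nonneg ht haa)
  · refine le_of_mul_le_mul_right ?_ hs
    calc (a ⬝ᵥ X *ᵥ b) * (a ⬝ᵥ X *ᵥ b) ≤ (a ⬝ᵥ X *ᵥ a) * (b ⬝ᵥ X *ᵥ b) := cs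
      _ ≤ (a ⬝ᵥ X *ᵥ a) * (t * (a ⬝ᵥ X *ᵥ b)) := mul_le_mul_of_nonneg_left h haa
      _ = t * (a ⬝ᵥ X *ᵥ a) * (a ⬝ᵥ X *ᵥ b) := by ring

lemma PosDef.dotProduct_mulVec_nonneg {X : Matrix ι ι ℝ} (hX : X.PosDef) (v : ι → ℝ) :
    0 ≤ v ⬝ᵥ X *ᵥ v := by
  simpa using hX.posSemidef.dotProduct_mulVec_nonneg v

lemma PosDef.of_dotProduct_mulVec_le {X Y : Matrix ι ι ℝ} (hY : Y.PosDef) (hX : X.IsSymm)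
    {t : ℝ} (ht : 0 ≤ t) (h : ∀ v, v ⬝ᵥ Y *ᵥ v ≤ t * (v ⬝ᵥ X *ᵥ v)) : X.PosDef := by
  refine .of_dotProduct_mulVec_pos (isHermitian_iff_isSymm.mpr hX) fun v hv => ?_
  have hYv : 0 < v ⬝ᵥ Y *ᵥ v := by simpa using hY.dotProduct_mulVec_pos hv
  simpa using pos_of_mul_pos_right (hYv.trans_le (h v)) ht

variable [DecidableEq ι]

lemma PosDef.mulVec_inv_mulVec {X : Matrix ι ι ℝ} (hX : X.PosDef) (v : ι → ℝ) :
    X *ᵥ (X⁻¹ *ᵥ v) = v := by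
  rw [mulVec_mulVec, mul_nonsing_inv X (X.isUnit_iff_isUnit_det.mp hX.isUnit), one_mulVec]

lemma PosDef.dotProduct_le_mul_dotProduct_inv_mulVec {X : Matrix ι ι ℝ} (hX : X.PosDef)
    {t : ℝ} (ht : 0 ≤ t) {v b : ι → ℝ} (h : b ⬝ᵥ X *ᵥ b ≤ t * (v ⬝ᵥ b)) :
    v ⬝ᵥ b ≤ t * (v ⬝ᵥ X⁻¹ *ᵥ v) := by
  have hsymm : X.IsSymm := isHermitian_iff_isSymm.mp hX.isHermitian
  have hab : (X⁻¹ *ᵥ v) ⬝ᵥ X *ᵥ b = v ⬝ᵥ b := by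
    rw [hsymm.dotProduct_mulVec_comm, hX.mulVec_inv_mulVec, dotProduct_comm]
  have haa : (X⁻¹ *ᵥ v) ⬝ᵥ X *ᵥ (X⁻¹ *ᵥ v) = v ⬝ᵥ X⁻¹ *ᵥ v := by
    rw [hX.mulVec_inv_mulVec, dotProduct_comm]
  rw [← hab, ← haa]
  exact dotProduct_mulVec_le_mul_of_le_mul hsymm (S := ⊤)
    (fun x _ => hX.dotProduct_mulVec_nonneg x) trivial trivial ht (hab ▸ h)

lemma PosDef.dotProduct_inv_mulVec_le {X Y : Matrix ι ι ℝ} (hX : X.PosDef) (hY : Y.PosDef)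
    {t : ℝ} (ht : 0 ≤ t) (h : ∀ v, v ⬝ᵥ X *ᵥ v ≤ t * (v ⬝ᵥ Y *ᵥ v)) (v : ι → ℝ) :
    v ⬝ᵥ Y⁻¹ *ᵥ v ≤ t * (v ⬝ᵥ X⁻¹ *ᵥ v) := by
  refine hX.dotProduct_le_mul_dotProduct_inv_mulVec ht ?_
  calc (Y⁻¹ *ᵥ v) ⬝ᵥ X *ᵥ (Y⁻¹ *ᵥ v) ≤ t * ((Y⁻¹ *ᵥ v) ⬝ᵥ Y *ᵥ (Y⁻¹ *ᵥ v)) := h _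
    _ = t * (v ⬝ᵥ Y⁻¹ *ᵥ v) := by rw [hY.mulVec_inv_mulVec, dotProduct_comm]

lemma mulVec_mulVec_eq_self_of_rightInvOn {K κ : Type*} [Field K] [Fintype κ]
    {B C : Matrix κ κ K} {W : Submodule K (κ → K)} (hC : ∀ v, C *ᵥ v ∈ W)
    (hBC : ∀ w ∈ W, B *ᵥ (C *ᵥ w) = w) {x : κ → K} (hx : x ∈ W) : C *ᵥ (B *ᵥ x) = x := by
  let T : W →ₗ[K] W := (C.mulVecLin.codRestrict W hC).domRestrict W
  have hT : Function.Injective T := fun y z hyz => Subtype.ext <| by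
    rw [← hBC y y.2, ← hBC z z.2]
    exact congrArg (B *ᵥ ·) (congrArg Subtype.val hyz)
  obtain ⟨y, hy⟩ := LinearMap.injective_iff_surjective.mp hT ⟨x, hx⟩
  have hy : C *ᵥ y = x := congrArg Subtype.val hy
  rw [← hy, hBC y y.2]

lemma dotProduct_mulVec_mul_transpose {R ι κ : Type*} [CommSemiring R] [Fintype ι] [Fintype κ]
    (P : Matrix ι κ R) (C : Matrix κ κ R) (v : ι → R) :
    v ⬝ᵥ (P * C * Pᵀ) *ᵥ v = (Pᵀ *ᵥ v) ⬝ᵥ C *ᵥ (Pᵀ *ᵥ v) := by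
  rw [← mulVec_mulVec, ← mulVec_mulVec, dotProduct_mulVec, mulVec_transpose]

lemma dotProduct_transpose_mul_mul {R ι κ : Type*} [CommSemiring R] [Fintype ι] [Fintype κ]
    (J : Matrix κ ι R) (C : Matrix κ κ R) (x : ι → R) :
    x ⬝ᵥ (Jᵀ * C * J) *ᵥ x = (J *ᵥ x) ⬝ᵥ C *ᵥ (J *ᵥ x) := by
  simpa using dotProduct_mulVec_mul_transpose Jᵀ C x

end Matrix

section FictitiousSpace

variable {ι κ : Type*} [Fintype ι] [Fintype κ]

lemma dotProduct_eq_inv_mulVec_dotProduct_mulVec {B Binv : Matrix κ κ ℝ}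
    {W : Submodule ℝ (κ → ℝ)} (hBinvSym : Binv.IsSymm) (hBinvRange : ∀ v, Binv *ᵥ v ∈ W)
    (hBinv : ∀ w ∈ W, B *ᵥ (Binv *ᵥ w) = w) (g : κ → ℝ) {x : κ → ℝ} (hx : x ∈ W) :
    g ⬝ᵥ x = (Binv *ᵥ g) ⬝ᵥ B *ᵥ x := by
  rw [dotProduct_comm (Binv *ᵥ g), hBinvSym.dotProduct_mulVec_comm,
    mulVec_mulVec_eq_self_of_rightInvOn hBinvRange hBinv hx]

variable [DecidableEq ι]

lemma dotProduct_mul_mul_transpose_le {A : Matrix ι ι ℝ} (hA : A.PosDef)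
    {𝒜 B Binv : Matrix κ κ ℝ} {W : Submodule ℝ (κ → ℝ)} {P : Matrix ι κ ℝ} {α c : ℝ}
    (hα : 0 < α) (hc : 0 ≤ c)
    (hequiv : ∀ w ∈ W, α⁻¹ * (w ⬝ᵥ 𝒜 *ᵥ w) ≤ w ⬝ᵥ B *ᵥ w)
    (hcont : ∀ w ∈ W, (P *ᵥ w) ⬝ᵥ A *ᵥ (P *ᵥ w) ≤ c * (w ⬝ᵥ 𝒜 *ᵥ w))
    (hBinvSym : Binv.IsSymm) (hBinvRange : ∀ v, Binv *ᵥ v ∈ W)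
    (hBinv : ∀ w ∈ W, B *ᵥ (Binv *ᵥ w) = w) (v : ι → ℝ) :
    v ⬝ᵥ (P * Binv * Pᵀ) *ᵥ v ≤ c * α * (v ⬝ᵥ A⁻¹ *ᵥ v) := by
  set w := Binv *ᵥ (Pᵀ *ᵥ v)
  have hw : w ∈ W := hBinvRange _
  have hvw : v ⬝ᵥ (P * Binv * Pᵀ) *ᵥ v = w ⬝ᵥ B *ᵥ w := by
    rw [dotProduct_mulVec_mul_transpose,
      dotProduct_eq_inv_mulVec_dotProduct_mulVec hBinvSym hBinvRange hBinv _ hw]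
  have hPw : v ⬝ᵥ P *ᵥ w = w ⬝ᵥ B *ᵥ w := by
    rw [dotProduct_mulVec, ← mulVec_transpose,
      dotProduct_eq_inv_mulVec_dotProduct_mulVec hBinvSym hBinvRange hBinv _ hw]
  rw [hvw, ← hPw]
  refine hA.dotProduct_le_mul_dotProduct_inv_mulVec (by positivity) ?_
  calc (P *ᵥ w) ⬝ᵥ A *ᵥ (P *ᵥ w) ≤ c * (w ⬝ᵥ 𝒜 *ᵥ w) := hcont w hw
    _ ≤ c * (α * (w ⬝ᵥ B *ᵥ w)) := by
      gcongr
      exact (inv_mul_le_iff₀ hα).mp (hequiv w hw)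
    _ = c * α * (v ⬝ᵥ P *ᵥ w) := by rw [hPw]; ring

lemma le_mul_dotProduct_mul_mul_transpose {A : Matrix ι ι ℝ} (hA : A.PosDef)
    {𝒜 B Binv : Matrix κ κ ℝ} {W : Submodule ℝ (κ → ℝ)} {P : Matrix ι κ ℝ} {J : Matrix κ ι ℝ}
    {β : ℝ} (hβ : 0 ≤ β) (hPJ : P * J = 1) (hJ : ∀ v, J *ᵥ v ∈ W) (hstab : Jᵀ * 𝒜 * J = A)
    (hBsym : B.IsSymm) (hBnonneg : ∀ w ∈ W, 0 ≤ w ⬝ᵥ B *ᵥ w)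
    (hequiv : ∀ w ∈ W, w ⬝ᵥ B *ᵥ w ≤ β * (w ⬝ᵥ 𝒜 *ᵥ w))
    (hBinvSym : Binv.IsSymm) (hBinvRange : ∀ v, Binv *ᵥ v ∈ W)
    (hBinv : ∀ w ∈ W, B *ᵥ (Binv *ᵥ w) = w) (v : ι → ℝ) :
    v ⬝ᵥ A⁻¹ *ᵥ v ≤ β * (v ⬝ᵥ (P * Binv * Pᵀ) *ᵥ v) := by
  set w := Binv *ᵥ (Pᵀ *ᵥ v)
  set u := J *ᵥ (A⁻¹ *ᵥ v)
  have hw : w ∈ W := hBinvRange _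
  have hu : u ∈ W := hJ _
  have hvu : v ⬝ᵥ A⁻¹ *ᵥ v = w ⬝ᵥ B *ᵥ u := by
    rw [← dotProduct_eq_inv_mulVec_dotProduct_mulVec hBinvSym hBinvRange hBinv _ hu,
      mulVec_transpose, ← dotProduct_mulVec, mulVec_mulVec, hPJ, one_mulVec]
  have huu : u ⬝ᵥ 𝒜 *ᵥ u = v ⬝ᵥ A⁻¹ *ᵥ v := by
    rw [← dotProduct_transpose_mul_mul, hstab, hA.mulVec_inv_mulVec, dotProduct_comm]
  rw [hvu, dotProduct_mulVec_mul_transpose,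
    dotProduct_eq_inv_mulVec_dotProduct_mulVec hBinvSym hBinvRange hBinv _ hw]
  refine dotProduct_mulVec_le_mul_of_le_mul hBsym hBnonneg hw hu hβ ?_
  calc u ⬝ᵥ B *ᵥ u ≤ β * (u ⬝ᵥ 𝒜 *ᵥ u) := hequiv u hu
    _ = β * (w ⬝ᵥ B *ᵥ u) := by rw [huu, hvu]

end FictitiousSpace

theorem stmt4_general {n m : ℕ}
    (A : Matrix (Fin n) (Fin n) ℝ) (hA : A.PosDef)
    (𝒜 B Binv : Matrix (Fin m) (Fin m) ℝ)
    (Wt : Submodule ℝ (Fin m → ℝ))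
    (P : Matrix (Fin n) (Fin m) ℝ) (J : Matrix (Fin m) (Fin n) ℝ)
    (hPI : P * J = 1)
    (hJrange : ∀ v : Fin n → ℝ, J.mulVec v ∈ Wt)
    (hstab : Jᵀ * 𝒜 * J = A)
    (α β c : ℝ) (hα : 0 < α) (hβ : 0 < β) (hc : 0 < c)
    (hBsym : B.IsSymm)
    (hBpd : ∀ w ∈ Wt, w ≠ 0 → 0 < w ⬝ᵥ B.mulVec w)
    (hequiv1 : ∀ w ∈ Wt, α⁻¹ * (w ⬝ᵥ 𝒜.mulVec w) ≤ w ⬝ᵥ B.mulVec w)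
    (hequiv2 : ∀ w ∈ Wt, w ⬝ᵥ B.mulVec w ≤ β * (w ⬝ᵥ 𝒜.mulVec w))
    (hcont : ∀ w ∈ Wt,
      (P.mulVec w) ⬝ᵥ A.mulVec (P.mulVec w) ≤ c * (w ⬝ᵥ 𝒜.mulVec w))
    (hBinvSym : Binv.IsSymm)
    (hBinvRange : ∀ v : Fin m → ℝ, Binv.mulVec v ∈ Wt)
    (hBinv : ∀ w ∈ Wt, B.mulVec (Binv.mulVec w) = w) :
    ∀ v : Fin n → ℝ,
      v ⬝ᵥ ((P * Binv * Pᵀ)⁻¹).mulVec v ≤ β * (v ⬝ᵥ A.mulVec v) ∧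
      v ⬝ᵥ A.mulVec v ≤ c * α * (v ⬝ᵥ ((P * Binv * Pᵀ)⁻¹).mulVec v) := by
  have hBnonneg : ∀ w ∈ Wt, 0 ≤ w ⬝ᵥ B *ᵥ w := fun w hw => by
    rcases eq_or_ne w 0 with rfl | hw0
    · simp
    · exact (hBpd w hw hw0).le
  have hlower := le_mul_dotProduct_mul_mul_transpose hA hβ.le hPI hJrange hstab hBsym hBnonneg
    hequiv2 hBinvSym hBinvRange hBinv
  have hupper := dotProduct_mul_mul_transpose_le hA hα hc.le hequiv1 hcont hBinvSym hBinvRange hBinv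
  have hsymm : (P * Binv * Pᵀ).IsSymm := by
    simp [IsSymm, transpose_mul, hBinvSym.eq, Matrix.mul_assoc]
  have hpd : (P * Binv * Pᵀ).PosDef := hA.inv.of_dotProduct_mulVec_le hsymm hβ.le hlower
  have hAinv : A⁻¹⁻¹ = A := nonsing_inv_nonsing_inv A (A.isUnit_iff_isUnit_det.mp hA.isUnit)
  intro v
  constructor
  · simpa [hAinv] using hA.inv.dotProduct_inv_mulVec_le hpd hβ.le hlower v
  · simpa [hAinv] using hpd.dotProduct_inv_mulVec_le hA.inv (by positivity) hupper v

theorem stmt4 {n m : ℕ}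
    (A : Matrix (Fin n) (Fin n) ℝ) (hA : A.PosDef)
    (𝒜 B Binv : Matrix (Fin m) (Fin m) ℝ)
    (Wt : Submodule ℝ (Fin m → ℝ))
    (P : Matrix (Fin n) (Fin m) ℝ) (J : Matrix (Fin m) (Fin n) ℝ)
    (hPI : P * J = 1)
    (hJrange : ∀ v : Fin n → ℝ, J.mulVec v ∈ Wt)
    (hstab : Jᵀ * 𝒜 * J = A)
    (α β c : ℝ) (hα : 0 < α) (hβ : 0 < β) (hc : 0 < c)
    (h𝒜sym : 𝒜.IsSymm) (hBsym : B.IsSymm)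
    (h𝒜pd : ∀ w ∈ Wt, w ≠ 0 → 0 < w ⬝ᵥ 𝒜.mulVec w)
    (hBpd : ∀ w ∈ Wt, w ≠ 0 → 0 < w ⬝ᵥ B.mulVec w)
    (hequiv1 : ∀ w ∈ Wt, α⁻¹ * (w ⬝ᵥ 𝒜.mulVec w) ≤ w ⬝ᵥ B.mulVec w)
    (hequiv2 : ∀ w ∈ Wt, w ⬝ᵥ B.mulVec w ≤ β * (w ⬝ᵥ 𝒜.mulVec w))
    (hcont : ∀ w ∈ Wt,
      (P.mulVec w) ⬝ᵥ A.mulVec (P.mulVec w) ≤ c * (w ⬝ᵥ 𝒜.mulVec w))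
    (hBinvSym : Binv.IsSymm)
    (hBinvRange : ∀ v : Fin m → ℝ, Binv.mulVec v ∈ Wt)
    (hBinv : ∀ w ∈ Wt, B.mulVec (Binv.mulVec w) = w) :
    ∀ v : Fin n → ℝ,
      v ⬝ᵥ ((P * Binv * Pᵀ)⁻¹).mulVec v ≤ β * (v ⬝ᵥ A.mulVec v) ∧
      v ⬝ᵥ A.mulVec v ≤ c * α * (v ⬝ᵥ ((P * Binv * Pᵀ)⁻¹).mulVec v) :=
  stmt4_general A hA 𝒜 B Binv Wt P J hPI hJrange hstab α β c hα hβ hc hBsym hBpd hequiv1 hequiv2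
    hcont hBinvSym hBinvRange hBinv
end

section
/- Let A be an n×n SPD matrix and M an n×n matrix such that M + Mᵀ − A is SPD. Then the symmetrized smoother M̄ := M (M + Mᵀ − A)⁻¹ Mᵀ is SPD, and the iteration matrix satisfies (I − M̄⁻¹A) = (I − M⁻ᵀA)(I − M⁻¹A), so that ⟨A(I − M̄⁻¹A)v, v⟩ = ⟨A(I − M⁻¹A)v, (I − M⁻¹A)v⟩ ≥ 0 for all v; in particular the spectrum of M̄⁻¹A lies in (0, 1]. -/
/-!
`M̄` is congruent to `(M + Mᵀ - A)⁻¹`, hence positive definite. Its inverse is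
`M⁻ᵀ (M + Mᵀ - A) M⁻¹ = M⁻ᵀ + M⁻¹ - M⁻ᵀ A M⁻¹`, so `1 - M̄⁻¹ A = (1 - M⁻ᵀ A)(1 - M⁻¹ A)` is a ring
identity, and for symmetric `A` it turns `A (1 - M̄⁻¹ A)` into the Gram matrix
`(1 - M⁻¹ A)ᵀ A (1 - M⁻¹ A)`. For an eigenpair `M̄⁻¹ A v = μ v` one then has
`μ ⟪A v, v⟫ = ⟪M̄⁻¹ (A v), A v⟫ > 0` and `(1 - μ) ⟪A v, v⟫ = ⟪A (1 - M̄⁻¹ A) v, v⟫ ≥ 0`.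
-/

open Matrix

namespace Matrix

variable {ι R : Type*} [Fintype ι]

theorem dotProduct_transpose_mul_mul_mulVec [CommSemiring R] (A E : Matrix ι ι R) (v : ι → R) :
    v ⬝ᵥ (Eᵀ * A * E) *ᵥ v = (E *ᵥ v) ⬝ᵥ A *ᵥ (E *ᵥ v) := by
  rw [← mulVec_mulVec, ← mulVec_mulVec, dotProduct_mulVec, vecMul_transpose]

theorem dotProduct_mul_one_sub_mul_mulVec [CommRing R] [DecidableEq ι] {A : Matrix ι ι R}
    (hA : A.IsSymm) (B : Matrix ι ι R) (v : ι → R) :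
    v ⬝ᵥ (A * ((1 - Bᵀ * A) * (1 - B * A))) *ᵥ v
      = ((1 - B * A) *ᵥ v) ⬝ᵥ A *ᵥ ((1 - B * A) *ᵥ v) := by
  have h : A * ((1 - Bᵀ * A) * (1 - B * A)) = (1 - B * A)ᵀ * A * (1 - B * A) := by
    rw [transpose_sub, transpose_one, transpose_mul, hA.eq]
    noncomm_ring
  rw [h, dotProduct_transpose_mul_mul_mulVec]

theorem inv_mul_inv_add_transpose_sub_mul_transpose [CommRing R] [DecidableEq ι]
    {A M : Matrix ι ι R} (hM : IsUnit M) (hW : IsUnit (M + Mᵀ - A)) :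
    (M * (M + Mᵀ - A)⁻¹ * Mᵀ)⁻¹ = (Mᵀ)⁻¹ + M⁻¹ - (Mᵀ)⁻¹ * A * M⁻¹ := by
  have hMd : IsUnit M.det := (isUnit_iff_isUnit_det M).1 hM
  have hMTd : IsUnit Mᵀ.det := by rwa [det_transpose]
  rw [mul_inv_rev, mul_inv_rev, nonsing_inv_nonsing_inv _ ((isUnit_iff_isUnit_det _).1 hW)]
  simp only [Matrix.mul_add, Matrix.add_mul, Matrix.mul_sub, Matrix.sub_mul, ← Matrix.mul_assoc,
    nonsing_inv_mul _ hMTd]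
  simp only [Matrix.mul_assoc, mul_nonsing_inv _ hMd, Matrix.one_mul, Matrix.mul_one]

theorem one_sub_inv_mul_eq_mul [CommRing R] [DecidableEq ι]
    {A M : Matrix ι ι R} (hM : IsUnit M) (hW : IsUnit (M + Mᵀ - A)) :
    1 - (M * (M + Mᵀ - A)⁻¹ * Mᵀ)⁻¹ * A = (1 - (Mᵀ)⁻¹ * A) * (1 - M⁻¹ * A) := by
  rw [inv_mul_inv_add_transpose_sub_mul_transpose hM hW]
  noncomm_ring

theorem exists_mulVec_eq_smul_of_mem_spectrum {K : Type*} [Field K] [DecidableEq ι]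
    {B : Matrix ι ι K} {μ : K} (hμ : μ ∈ spectrum K B) : ∃ v ≠ 0, B *ᵥ v = μ • v := by
  rw [← spectrum_toLin', ← Module.End.hasEigenvalue_iff_mem_spectrum] at hμ
  obtain ⟨v, hv⟩ := hμ.exists_hasEigenvector
  exact ⟨v, hv.2, by simpa using Module.End.mem_eigenspace_iff.1 hv.1⟩

theorem mem_Ioc_of_mem_spectrum_mul [DecidableEq ι] {A P : Matrix ι ι ℝ} (hA : A.PosDef)
    (hP : P.PosDef) (hAPA : ∀ v, 0 ≤ v ⬝ᵥ (A * (1 - P * A)) *ᵥ v) {μ : ℝ}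
    (hμ : μ ∈ spectrum ℝ (P * A)) : μ ∈ Set.Ioc 0 1 := by
  obtain ⟨v, hv, hPAv⟩ := exists_mulVec_eq_smul_of_mem_spectrum hμ
  have hvAv : 0 < v ⬝ᵥ A *ᵥ v := by simpa using hA.dotProduct_mulVec_pos hv
  have hAv : A *ᵥ v ≠ 0 := (mulVec_injective_of_isUnit hA.isUnit).ne_iff' (mulVec_zero A) |>.2 hv
  have hpos : 0 < μ * (v ⬝ᵥ A *ᵥ v) := by
    have := hP.dotProduct_mulVec_pos hAv
    rwa [star_trivial, mulVec_mulVec, hPAv, dotProduct_smul, smul_eq_mul, dotProduct_comm] at this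
  have hle : 0 ≤ (1 - μ) * (v ⬝ᵥ A *ᵥ v) := by
    have := hAPA v
    rwa [← mulVec_mulVec, sub_mulVec, one_mulVec, hPAv, mulVec_sub, dotProduct_sub, mulVec_smul,
      dotProduct_smul, smul_eq_mul, ← one_sub_mul] at this
  exact ⟨pos_of_mul_pos_left hpos hvAv.le, sub_nonneg.1 (nonneg_of_mul_nonneg_left hle hvAv)⟩

end Matrix

theorem stmt5 {n : ℕ}
    (A M : Matrix (Fin n) (Fin n) ℝ) (hA : A.PosDef) (hM : IsUnit M)
    (hMA : (M + Mᵀ - A).PosDef) :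
    (M * (M + Mᵀ - A)⁻¹ * Mᵀ).PosDef ∧
    (1 - (M * (M + Mᵀ - A)⁻¹ * Mᵀ)⁻¹ * A) = (1 - (Mᵀ)⁻¹ * A) * (1 - M⁻¹ * A) ∧
    (∀ v : Fin n → ℝ,
      v ⬝ᵥ (A * (1 - (M * (M + Mᵀ - A)⁻¹ * Mᵀ)⁻¹ * A)).mulVec v
        = ((1 - M⁻¹ * A).mulVec v) ⬝ᵥ A.mulVec ((1 - M⁻¹ * A).mulVec v) ∧
      0 ≤ v ⬝ᵥ (A * (1 - (M * (M + Mᵀ - A)⁻¹ * Mᵀ)⁻¹ * A)).mulVec v) ∧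
    (∀ μ ∈ spectrum ℝ ((M * (M + Mᵀ - A)⁻¹ * Mᵀ)⁻¹ * A), μ ∈ Set.Ioc (0 : ℝ) 1) := by
  have hsmoother : (M * (M + Mᵀ - A)⁻¹ * Mᵀ).PosDef := by
    have := (IsUnit.posDef_star_right_conjugate_iff hM).2 hMA.inv
    rwa [star_eq_conjTranspose, conjTranspose_eq_transpose_of_trivial] at this
  have hfactor := one_sub_inv_mul_eq_mul hM hMA.isUnit
  have henergy : ∀ v : Fin n → ℝ,
      v ⬝ᵥ (A * (1 - (M * (M + Mᵀ - A)⁻¹ * Mᵀ)⁻¹ * A)).mulVec v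
        = ((1 - M⁻¹ * A).mulVec v) ⬝ᵥ A.mulVec ((1 - M⁻¹ * A).mulVec v) := fun v => by
    rw [hfactor, ← transpose_nonsing_inv]
    exact dotProduct_mul_one_sub_mul_mulVec (isHermitian_iff_isSymm.1 hA.isHermitian) _ v
  have hnonneg : ∀ v : Fin n → ℝ,
      0 ≤ v ⬝ᵥ (A * (1 - (M * (M + Mᵀ - A)⁻¹ * Mᵀ)⁻¹ * A)).mulVec v := fun v => by
    simpa [henergy v] using hA.posSemidef.dotProduct_mulVec_nonneg ((1 - M⁻¹ * A) *ᵥ v)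
  exact ⟨hsmoother, hfactor, fun v => ⟨henergy v, hnonneg v⟩,
    fun μ hμ => mem_Ioc_of_mem_spectrum_mul hA hsmoother.inv hnonneg hμ⟩
end

section
/- Let A be an n×n SPD matrix, M an n×n matrix with M + Mᵀ − A SPD, and let G be any n×n symmetric positive semidefinite matrix. Then both the additive preconditioner B_add⁻¹ := M̄⁻¹ + G and the multiplicative preconditioner B_mult⁻¹ := M̄⁻¹ + (I − M⁻ᵀA) G (I − A M⁻¹) are symmetric positive definite, where M̄ = M (M + Mᵀ − A)⁻¹ Mᵀ. -/
open Matrix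

lemma Matrix.PosDef.mul_mul_transpose_of_isUnit {ι : Type*} [Fintype ι] [DecidableEq ι]
    {N M : Matrix ι ι ℝ} (hN : N.PosDef) (hM : IsUnit M) : (M * N * Mᵀ).PosDef := by
  simpa using hN.mul_mul_conjTranspose_same (vecMul_injective_iff_isUnit.2 hM)

lemma Matrix.transpose_one_sub_mul_inv {ι R : Type*} [Fintype ι] [DecidableEq ι] [CommRing R]
    {A M : Matrix ι ι R} (hA : Aᵀ = A) : (1 - A * M⁻¹)ᵀ = 1 - (Mᵀ)⁻¹ * A := by
  rw [transpose_sub, transpose_one, transpose_mul, transpose_nonsing_inv, hA]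

theorem stmt6 {n : ℕ}
    (A M G : Matrix (Fin n) (Fin n) ℝ) (hA : A.PosDef) (hM : IsUnit M)
    (hMA : (M + Mᵀ - A).PosDef) (hG : G.PosSemidef) :
    ((M * (M + Mᵀ - A)⁻¹ * Mᵀ)⁻¹ + G).PosDef ∧
    ((M * (M + Mᵀ - A)⁻¹ * Mᵀ)⁻¹
      + (1 - (Mᵀ)⁻¹ * A) * G * (1 - A * M⁻¹)).PosDef := by
  have hMbarInv := (hMA.inv.mul_mul_transpose_of_isUnit hM).inv
  have hAT : Aᵀ = A := by rw [← conjTranspose_eq_transpose_of_trivial]; exact hA.1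
  have hGconj := hG.conjTranspose_mul_mul_same (1 - A * M⁻¹)
  rw [conjTranspose_eq_transpose_of_trivial, transpose_one_sub_mul_inv hAT] at hGconj
  exact ⟨hMbarInv.add_posSemidef hG, hMbarInv.add_posSemidef hGconj⟩
end

section
/- Let 𝔄 = [[𝒜, Cᵀ], [C, 0]] be invertible with 𝒜 SPSD, C full row rank, Ker(𝒜) ∩ Ker(C) = {0}, and let X be an m×p matrix of full column rank. Then the Schur complement Σ = −[0, −Xᵀ] 𝔄⁻¹ [0, −Xᵀ]ᵀ = −Xᵀ N X, where N is the (2,2) block of 𝔄⁻¹, is symmetric positive semidefinite; if moreover 𝒜 is positive definite, then Σ is symmetric positive definite. -/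
/-!
Write `B` and `N` for the upper-right and lower-right blocks of `𝔄⁻¹`. Reading `𝔄 𝔄⁻¹ = 1`
blockwise gives `C B = 1` and `𝒜 B + Cᵀ N = 0`, hence `N = (C B)ᵀ N = -Bᵀ 𝒜 B`, and the Schur
complement is the congruence `Σ = (B X)ᵀ 𝒜 (B X)`. Since `C (B X) = X` and `X` has full column
rank, `B X` is injective, so `Σ` inherits semidefiniteness, and definiteness, from `𝒜`.
-/

open Matrix

namespace Matrix

theorem mulVec_injective_of_rank_eq_card_s13 {m p K : Type*} [Fintype p] [Field K]
    {A : Matrix m p K} (hA : A.rank = Fintype.card p) : Function.Injective A.mulVec := by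
  rw [mulVec_injective_iff, linearIndependent_iff_card_eq_finrank_span, ← hA,
    rank_eq_finrank_span_cols, Set.finrank]

theorem fromRows_zero_transpose_mul_mul {m n p R : Type*} [Fintype m] [Fintype n] [CommRing R]
    (P : Matrix (n ⊕ m) (n ⊕ m) R) (Y : Matrix m p R) :
    (fromRows (0 : Matrix n p R) Y)ᵀ * P * fromRows (0 : Matrix n p R) Y =
      Yᵀ * P.toBlocks₂₂ * Y := by
  conv_lhs => rw [← fromBlocks_toBlocks P]
  rw [transpose_fromRows, fromCols_mul_fromBlocks, fromCols_mul_fromRows]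
  simp

section SaddlePoint

variable {m n R : Type*} [Fintype m] [Fintype n] [DecidableEq m] [DecidableEq n] [CommRing R]
  (A : Matrix n n R) (C : Matrix m n R)

theorem saddlePoint_mul_inv_blocks (h : IsUnit (fromBlocks A Cᵀ C 0)) :
    A * (fromBlocks A Cᵀ C 0)⁻¹.toBlocks₁₂ + Cᵀ * (fromBlocks A Cᵀ C 0)⁻¹.toBlocks₂₂ = 0 ∧
      C * (fromBlocks A Cᵀ C 0)⁻¹.toBlocks₁₂ = 1 := by
  have h1 := mul_nonsing_inv _ ((isUnit_iff_isUnit_det _).mp h)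
  rw [← fromBlocks_toBlocks (fromBlocks A Cᵀ C 0)⁻¹, fromBlocks_multiply, ← fromBlocks_one,
    fromBlocks_inj] at h1
  simp only [Matrix.zero_mul, add_zero] at h1
  exact ⟨h1.2.1, h1.2.2.2⟩

theorem toBlocks₂₂_saddlePoint_inv (h : IsUnit (fromBlocks A Cᵀ C 0)) :
    (fromBlocks A Cᵀ C 0)⁻¹.toBlocks₂₂ =
      -((fromBlocks A Cᵀ C 0)⁻¹.toBlocks₁₂ᵀ * A * (fromBlocks A Cᵀ C 0)⁻¹.toBlocks₁₂) := by
  set B := (fromBlocks A Cᵀ C 0)⁻¹.toBlocks₁₂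
  set N := (fromBlocks A Cᵀ C 0)⁻¹.toBlocks₂₂
  obtain ⟨hAB, hCB⟩ := saddlePoint_mul_inv_blocks A C h
  calc N = (C * B)ᵀ * N := by rw [hCB, transpose_one, Matrix.one_mul]
    _ = Bᵀ * (Cᵀ * N) := by rw [transpose_mul, Matrix.mul_assoc]
    _ = -(Bᵀ * A * B) := by
      rw [eq_neg_of_add_eq_zero_right hAB, Matrix.mul_neg, Matrix.mul_assoc]

end SaddlePoint

end Matrix

theorem stmt13_general {n m p : ℕ}
    (𝒜 : Matrix (Fin n) (Fin n) ℝ) (h𝒜 : 𝒜.PosSemidef)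
    (C : Matrix (Fin m) (Fin n) ℝ)
    (h𝔄 : IsUnit (Matrix.fromBlocks 𝒜 Cᵀ C (0 : Matrix (Fin m) (Fin m) ℝ)))
    (X : Matrix (Fin m) (Fin p) ℝ) (hX : X.rank = p) :
    (-((Matrix.fromRows (0 : Matrix (Fin n) (Fin p) ℝ) (-X))ᵀ
        * (Matrix.fromBlocks 𝒜 Cᵀ C 0)⁻¹
        * Matrix.fromRows (0 : Matrix (Fin n) (Fin p) ℝ) (-X)))
      = -(Xᵀ * (Matrix.fromBlocks 𝒜 Cᵀ C (0 : Matrix (Fin m) (Fin m) ℝ))⁻¹.toBlocks₂₂ * X) ∧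
    (-((Matrix.fromRows (0 : Matrix (Fin n) (Fin p) ℝ) (-X))ᵀ
        * (Matrix.fromBlocks 𝒜 Cᵀ C 0)⁻¹
        * Matrix.fromRows (0 : Matrix (Fin n) (Fin p) ℝ) (-X))).PosSemidef ∧
    (𝒜.PosDef →
      (-((Matrix.fromRows (0 : Matrix (Fin n) (Fin p) ℝ) (-X))ᵀ
          * (Matrix.fromBlocks 𝒜 Cᵀ C 0)⁻¹
          * Matrix.fromRows (0 : Matrix (Fin n) (Fin p) ℝ) (-X))).PosDef) := by
  set B := (fromBlocks 𝒜 Cᵀ C 0)⁻¹.toBlocks₁₂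
  have hid := fromRows_zero_transpose_mul_mul (fromBlocks 𝒜 Cᵀ C 0)⁻¹ (-X)
  simp only [transpose_neg, Matrix.neg_mul, Matrix.mul_neg, neg_neg] at hid
  have hSchur : -(Xᵀ * (fromBlocks 𝒜 Cᵀ C 0)⁻¹.toBlocks₂₂ * X) = (B * X)ᴴ * 𝒜 * (B * X) := by
    rw [toBlocks₂₂_saddlePoint_inv 𝒜 C h𝔄, conjTranspose_eq_transpose_of_trivial, transpose_mul]
    simp only [Matrix.mul_neg, Matrix.neg_mul, neg_neg, Matrix.mul_assoc]
    rfl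
  have hCBX : C * (B * X) = X := by
    rw [← Matrix.mul_assoc, (saddlePoint_mul_inv_blocks 𝒜 C h𝔄).2, Matrix.one_mul]
  have hBX : Function.Injective (B * X).mulVec := fun u v huv =>
    mulVec_injective_of_rank_eq_card_s13 (hX.trans (Fintype.card_fin p).symm) <| by
      rw [← hCBX, ← mulVec_mulVec u, ← mulVec_mulVec v, huv]
  rw [hid, hSchur]
  exact ⟨rfl, h𝒜.conjTranspose_mul_mul_same _, fun h𝒜pd => h𝒜pd.conjTranspose_mul_mul_same hBX⟩

theorem stmt13 {n m p : ℕ}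
    (𝒜 : Matrix (Fin n) (Fin n) ℝ) (h𝒜 : 𝒜.PosSemidef)
    (C : Matrix (Fin m) (Fin n) ℝ) (hC : C.rank = m)
    (hker : ∀ x : Fin n → ℝ, 𝒜.mulVec x = 0 → C.mulVec x = 0 → x = 0)
    (h𝔄 : IsUnit (Matrix.fromBlocks 𝒜 Cᵀ C (0 : Matrix (Fin m) (Fin m) ℝ)))
    (X : Matrix (Fin m) (Fin p) ℝ) (hX : X.rank = p) :
    (-((Matrix.fromRows (0 : Matrix (Fin n) (Fin p) ℝ) (-X))ᵀ
        * (Matrix.fromBlocks 𝒜 Cᵀ C 0)⁻¹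
        * Matrix.fromRows (0 : Matrix (Fin n) (Fin p) ℝ) (-X)))
      = -(Xᵀ * (Matrix.fromBlocks 𝒜 Cᵀ C (0 : Matrix (Fin m) (Fin m) ℝ))⁻¹.toBlocks₂₂ * X) ∧
    (-((Matrix.fromRows (0 : Matrix (Fin n) (Fin p) ℝ) (-X))ᵀ
        * (Matrix.fromBlocks 𝒜 Cᵀ C 0)⁻¹
        * Matrix.fromRows (0 : Matrix (Fin n) (Fin p) ℝ) (-X))).PosSemidef ∧
    (𝒜.PosDef →
      (-((Matrix.fromRows (0 : Matrix (Fin n) (Fin p) ℝ) (-X))ᵀ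
          * (Matrix.fromBlocks 𝒜 Cᵀ C 0)⁻¹
          * Matrix.fromRows (0 : Matrix (Fin n) (Fin p) ℝ) (-X))).PosDef) :=
  stmt13_general 𝒜 h𝒜 C h𝔄 X hX
end

section
/- Let A be n×n SPD with diagonal D and suppose b > 0 satisfies vᵀAv ≤ b vᵀDv for all v. Let p be a polynomial with p(0) = 1 and |p(t)| < 1 for all t in (0, 1]. Define M⁻¹ := (I − p(b⁻¹D⁻¹A)) A⁻¹. Then M is well-defined (I − p(b⁻¹D⁻¹A) is invertible), M is symmetric positive definite, and 2M − A is symmetric positive definite (i.e., the iteration with M is A-convergent). -/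
/-!
Write `D = Wᴴ W` and `A = Wᴴ diag(μ) W` for one invertible `W` (diagonalize `D^{-1/2} A D^{-1/2}`
orthogonally). Then `b⁻¹ D⁻¹ A = W⁻¹ diag(μ / b) W`, and the Rayleigh quotients of `A` against `D`
at the columns of `W⁻¹` show `μ / b ∈ (0, 1]`. Every matrix in sight is then a congruence or a
similarity of a diagonal one: with `gᵢ = 1 - p(μᵢ / b) ∈ (0, 2)`,
`M = A (1 - p(b⁻¹ D⁻¹ A))⁻¹ = Wᴴ diag(μ / g) W` and `2M - A = Wᴴ diag(μ (2 - g) / g) W`.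
-/

open Matrix Polynomial

lemma Polynomial.aeval_units_inv_mul_mul {R A : Type*} [CommSemiring R] [Semiring A]
    [Algebra R A] (u : Aˣ) (x : A) (p : R[X]) :
    aeval (↑u⁻¹ * x * ↑u) p = ↑u⁻¹ * aeval x p * ↑u := by
  simp only [aeval_eq_sum_range, Finset.mul_sum, Finset.sum_mul, Units.conj_pow', mul_smul_comm,
    smul_mul_assoc]

namespace Matrix

variable {m R : Type*} [Fintype m] [DecidableEq m]

lemma aeval_diagonal [CommSemiring R] (μ : m → R) (p : R[X]) :
    aeval (diagonal μ) p = diagonal fun i => p.eval (μ i) := by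
  rw [← diagonalAlgHom_apply R, aeval_algHom_apply, aeval_pi_apply]
  simp

lemma aeval_inv_mul_diagonal_mul [CommRing R] {W : Matrix m m R} (hW : IsUnit W) (μ : m → R)
    (p : R[X]) :
    aeval (W⁻¹ * diagonal μ * W) p = W⁻¹ * diagonal (fun i => p.eval (μ i)) * W := by
  obtain ⟨u, rfl⟩ := hW
  rw [← coe_units_inv, aeval_units_inv_mul_mul, aeval_diagonal]

lemma one_sub_aeval_inv_mul_diagonal_mul [CommRing R] {W : Matrix m m R} (hW : IsUnit W)
    (μ : m → R) (p : R[X]) :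
    1 - aeval (W⁻¹ * diagonal μ * W) p = W⁻¹ * diagonal (fun i => 1 - p.eval (μ i)) * W := calc
  _ = W⁻¹ * diagonal (fun _ => 1) * W - W⁻¹ * diagonal (fun i => p.eval (μ i)) * W := by
    rw [aeval_inv_mul_diagonal_mul hW, diagonal_one, Matrix.mul_one,
      nonsing_inv_mul _ ((isUnit_iff_isUnit_det W).mp hW)]
  _ = _ := by rw [← sub_mul, ← mul_sub, ← diagonal_sub]

lemma inv_inv_mul_diagonal_mul {K : Type*} [Field K] {W : Matrix m m K} (hW : IsUnit W)
    {g : m → K} (hg : ∀ i, g i ≠ 0) :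
    (W⁻¹ * diagonal g * W)⁻¹ = W⁻¹ * diagonal (fun i => (g i)⁻¹) * W := by
  have hWdet := (isUnit_iff_isUnit_det W).mp hW
  apply inv_eq_right_inv
  have hgg : (fun i => g i * (g i)⁻¹) = fun _ => 1 := funext fun i => mul_inv_cancel₀ (hg i)
  simp only [mul_assoc, mul_nonsing_inv_cancel_left _ _ hWdet]
  rw [← mul_assoc (diagonal g), diagonal_mul_diagonal, hgg, diagonal_one, Matrix.one_mul,
    nonsing_inv_mul _ hWdet]

lemma IsHermitian.exists_eq_conjTranspose_mul_diagonal_mul {A : Matrix m m ℝ}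
    (hA : A.IsHermitian) {d : m → ℝ} (hd : ∀ i, 0 < d i) :
    ∃ (W : Matrix m m ℝ) (μ : m → ℝ), IsUnit W ∧ diagonal d = Wᴴ * W ∧
      A = Wᴴ * diagonal μ * W := by
  set T := diagonal fun i => √(d i)
  set S := diagonal fun i => (√(d i))⁻¹
  have hTS : T * S = 1 := by
    simp [T, S, diagonal_mul_diagonal, (Real.sqrt_pos.2 (hd _)).ne']
  have hST : S * T = 1 := by
    simp [T, S, diagonal_mul_diagonal, (Real.sqrt_pos.2 (hd _)).ne']
  have hTT : T * T = diagonal d := by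
    simp [T, diagonal_mul_diagonal, Real.mul_self_sqrt (hd _).le]
  have hB : (S * A * S).IsHermitian := by
    simpa [S] using isHermitian_conjTranspose_mul_mul S hA
  set U : Matrix m m ℝ := (hB.eigenvectorUnitary : Matrix m m ℝ)
  have hUU : U * star U = 1 := mem_unitaryGroup_iff.mp hB.eigenvectorUnitary.2
  have hspec : S * A * S = U * diagonal hB.eigenvalues * star U := by
    simpa [Unitary.conjStarAlgAut_apply] using hB.spectral_theorem
  have hWH : (star U * T)ᴴ = T * U := by
    rw [conjTranspose_mul, ← star_eq_conjTranspose (star U), star_star]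
    simp [T]
  refine ⟨star U * T, hB.eigenvalues, ?_, ?_, ?_⟩
  · exact (IsUnit.of_mul_eq_one U (mem_unitaryGroup_iff'.mp hB.eigenvectorUnitary.2)).mul
      (IsUnit.of_mul_eq_one S hTS)
  · rw [hWH, ← hTT, mul_assoc, ← mul_assoc U, hUU, one_mul]
  · calc A = T * (S * A * S) * T := by
          simp only [← mul_assoc, hTS, one_mul]
          rw [mul_assoc, hST, mul_one]
      _ = _ := by
          rw [hWH]
          conv_lhs => rw [hspec]
          simp only [mul_assoc]

lemma dotProduct_mulVec_conjTranspose_mul_diagonal_mul {W : Matrix m m ℝ} (hW : IsUnit W)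
    (μ : m → ℝ) (i : m) :
    (W⁻¹ *ᵥ Pi.single i 1) ⬝ᵥ (Wᴴ * diagonal μ * W) *ᵥ (W⁻¹ *ᵥ Pi.single i 1) = μ i := by
  have hWv : W *ᵥ (W⁻¹ *ᵥ Pi.single i 1) = Pi.single i 1 := by
    rw [mulVec_mulVec, mul_nonsing_inv _ ((isUnit_iff_isUnit_det W).mp hW), one_mulVec]
  rw [← mulVec_mulVec, ← mulVec_mulVec, hWv, dotProduct_mulVec,
    conjTranspose_eq_transpose_of_trivial, vecMul_transpose, hWv]
  simp

lemma PosDef.mem_Ioc_of_eq_conjTranspose_mul_diagonal_mul {A D W : Matrix m m ℝ} (hA : A.PosDef)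
    {b : ℝ} (hAD : ∀ v, v ⬝ᵥ A *ᵥ v ≤ b * (v ⬝ᵥ D *ᵥ v)) (hW : IsUnit W) {μ : m → ℝ}
    (hD : D = Wᴴ * W) (hAW : A = Wᴴ * diagonal μ * W) (i : m) : μ i ∈ Set.Ioc 0 b := by
  set v := W⁻¹ *ᵥ Pi.single i 1
  have hAv : v ⬝ᵥ A *ᵥ v = μ i := by
    rw [hAW]
    exact dotProduct_mulVec_conjTranspose_mul_diagonal_mul hW μ i
  have hDv : v ⬝ᵥ D *ᵥ v = 1 := by
    have := dotProduct_mulVec_conjTranspose_mul_diagonal_mul hW (fun _ => 1) i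
    rwa [diagonal_one, Matrix.mul_one, ← hD] at this
  have hv : v ≠ 0 := by
    rintro hv
    simp [hv] at hDv
  refine ⟨?_, ?_⟩
  · simpa [hAv] using hA.dotProduct_mulVec_pos hv
  · simpa [hAv, hDv] using hAD v

lemma inv_conjTranspose_mul_self_mul [CommRing R] [StarRing R] {W : Matrix m m R} (hW : IsUnit W)
    (M : Matrix m m R) : (Wᴴ * W)⁻¹ * (Wᴴ * M * W) = W⁻¹ * M * W := by
  have hWH : IsUnit Wᴴ.det := by
    simpa [det_conjTranspose] using ((isUnit_iff_isUnit_det W).mp hW).star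
  rw [mul_inv_rev, mul_assoc, ← mul_assoc Wᴴ⁻¹, ← mul_assoc Wᴴ⁻¹, nonsing_inv_mul _ hWH, one_mul,
    mul_assoc]

lemma posDef_conjTranspose_mul_diagonal_mul {W : Matrix m m ℝ} (hW : IsUnit W) {μ : m → ℝ}
    (hμ : ∀ i, 0 < μ i) : (Wᴴ * diagonal μ * W).PosDef :=
  (posDef_diagonal_iff.mpr hμ).conjTranspose_mul_mul_same (mulVec_injective_iff_isUnit.mpr hW)

theorem posDef_mul_inv_one_sub_aeval {A X W : Matrix m m ℝ} (hW : IsUnit W) {μ ν : m → ℝ}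
    (hν : ∀ i, 0 < ν i) (hA : A = Wᴴ * diagonal ν * W) (hX : X = W⁻¹ * diagonal μ * W)
    {p : ℝ[X]} (hp : ∀ i, |p.eval (μ i)| < 1) :
    IsUnit (1 - aeval X p) ∧ (A * (1 - aeval X p)⁻¹).PosDef ∧
      ((2 : ℝ) • (A * (1 - aeval X p)⁻¹) - A).PosDef := by
  have hWdet := (isUnit_iff_isUnit_det W).mp hW
  set g : m → ℝ := fun i => 1 - p.eval (μ i)
  have hg : ∀ i, 0 < g i ∧ g i < 2 := fun i => by
    have := abs_lt.mp (hp i)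
    constructor <;> linarith [this.1, this.2]
  have hE : 1 - aeval X p = W⁻¹ * diagonal g * W := by
    rw [hX, one_sub_aeval_inv_mul_diagonal_mul hW]
  have hM : A * (W⁻¹ * diagonal (fun i => (g i)⁻¹) * W) =
      Wᴴ * diagonal (fun i => ν i / g i) * W := by
    rw [hA]
    simp only [mul_assoc, mul_nonsing_inv_cancel_left _ _ hWdet]
    rw [← mul_assoc (diagonal ν), diagonal_mul_diagonal]
    simp only [div_eq_mul_inv]
  have h2M : (2 : ℝ) • (Wᴴ * diagonal (fun i => ν i / g i) * W) - A =
      Wᴴ * diagonal (fun i => ν i * (2 - g i) / g i) * W := by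
    rw [hA, ← smul_mul_assoc, ← mul_smul_comm, ← diagonal_smul, ← sub_mul, ← mul_sub,
      diagonal_sub]
    congr 3 with i
    rw [Pi.smul_apply, smul_eq_mul]
    field_simp [(hg i).1.ne']
  rw [hE, inv_inv_mul_diagonal_mul hW fun i => (hg i).1.ne', hM, h2M]
  refine ⟨(isUnit_nonsing_inv_iff.mpr hW |>.mul (isUnit_diagonal.mpr
    (Pi.isUnit_iff.mpr fun i => (hg i).1.ne'.isUnit))).mul hW, ?_, ?_⟩
  · exact posDef_conjTranspose_mul_diagonal_mul hW fun i => div_pos (hν i) (hg i).1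
  · exact posDef_conjTranspose_mul_diagonal_mul hW fun i =>
      div_pos (mul_pos (hν i) (sub_pos.mpr (hg i).2)) (hg i).1

end Matrix

theorem stmt17_general {n : ℕ}
    (A : Matrix (Fin n) (Fin n) ℝ) (hA : A.PosDef)
    (b : ℝ) (hb : 0 < b)
    (hbd : ∀ v : Fin n → ℝ,
      v ⬝ᵥ A.mulVec v ≤ b * (v ⬝ᵥ (Matrix.diagonal (fun i => A i i)).mulVec v))
    (p : Polynomial ℝ)
    (hp : ∀ t : ℝ, 0 < t → t ≤ 1 → |p.eval t| < 1) :
    IsUnit ((1 : Matrix (Fin n) (Fin n) ℝ)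
        - Polynomial.aeval (b⁻¹ • ((Matrix.diagonal (fun i => A i i))⁻¹ * A)) p) ∧
    (A * ((1 : Matrix (Fin n) (Fin n) ℝ)
        - Polynomial.aeval (b⁻¹ • ((Matrix.diagonal (fun i => A i i))⁻¹ * A)) p)⁻¹).PosDef ∧
    ((2 : ℝ) • (A * ((1 : Matrix (Fin n) (Fin n) ℝ)
        - Polynomial.aeval (b⁻¹ • ((Matrix.diagonal (fun i => A i i))⁻¹ * A)) p)⁻¹)
      - A).PosDef := by
  obtain ⟨W, μ, hW, hD, hAW⟩ :=
    hA.isHermitian.exists_eq_conjTranspose_mul_diagonal_mul fun _ => hA.diag_pos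
  have hμ := hA.mem_Ioc_of_eq_conjTranspose_mul_diagonal_mul hbd hW hD hAW
  have hX : b⁻¹ • ((diagonal fun i => A i i)⁻¹ * A) = W⁻¹ * diagonal (b⁻¹ • μ) * W := by
    rw [hD, hAW, inv_conjTranspose_mul_self_mul hW, diagonal_smul, mul_smul_comm, smul_mul_assoc]
  exact posDef_mul_inv_one_sub_aeval hW (fun i => (hμ i).1) hAW hX fun i =>
    hp _ (mul_pos (inv_pos.mpr hb) (hμ i).1) ((inv_mul_le_one₀ hb).mpr (hμ i).2)

theorem stmt17 {n : ℕ}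
    (A : Matrix (Fin n) (Fin n) ℝ) (hA : A.PosDef)
    (b : ℝ) (hb : 0 < b)
    (hbd : ∀ v : Fin n → ℝ,
      v ⬝ᵥ A.mulVec v ≤ b * (v ⬝ᵥ (Matrix.diagonal (fun i => A i i)).mulVec v))
    (p : Polynomial ℝ) (hp0 : p.eval 0 = 1)
    (hp : ∀ t : ℝ, 0 < t → t ≤ 1 → |p.eval t| < 1) :
    IsUnit ((1 : Matrix (Fin n) (Fin n) ℝ)
        - Polynomial.aeval (b⁻¹ • ((Matrix.diagonal (fun i => A i i))⁻¹ * A)) p) ∧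
    (A * ((1 : Matrix (Fin n) (Fin n) ℝ)
        - Polynomial.aeval (b⁻¹ • ((Matrix.diagonal (fun i => A i i))⁻¹ * A)) p)⁻¹).PosDef ∧
    ((2 : ℝ) • (A * ((1 : Matrix (Fin n) (Fin n) ℝ)
        - Polynomial.aeval (b⁻¹ • ((Matrix.diagonal (fun i => A i i))⁻¹ * A)) p)⁻¹)
      - A).PosDef :=
  stmt17_general A hA b hb hbd p hp
end

section
/- Let W = diag(w_i) with w_i = Σ_j |a_ij| √(a_ii/a_jj), where A = (a_ij) is an n×n symmetric matrix with positive diagonal entries. Then vᵀ A v ≤ vᵀ W v for all v ∈ ℝⁿ (i.e., the ℓ₁-smoother W dominates A in the Loewner order). -/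
open Matrix

theorem stmt18 {n : ℕ}
    (A : Matrix (Fin n) (Fin n) ℝ) (hsym : A.IsSymm)
    (hdiag : ∀ i, 0 < A i i) :
    ∀ v : Fin n → ℝ,
      v ⬝ᵥ A.mulVec v ≤
        v ⬝ᵥ (Matrix.diagonal (fun i =>
          ∑ j, |A i j| * Real.sqrt (A i i / A j j))).mulVec v := by
  intro v
  classical
  set f : Fin n → Fin n → ℝ :=
    fun i j => |A i j| * Real.sqrt (A i i / A j j) * (v i * v i) with hf
  have key : ∀ i j, v i * (A i j * v j) ≤ (f i j + f j i) / 2 := by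
    intro i j
    have hii := hdiag i
    have hjj := hdiag j
    have hji : A j i = A i j := by
      have := hsym
      rw [Matrix.IsSymm] at this
      calc A j i = Aᵀ i j := rfl
        _ = A i j := by rw [this]
    set s := Real.sqrt (A i i / A j j) with hs
    have hs2 : s ^ 2 = A i i / A j j := Real.sq_sqrt (by positivity)
    have hspos : 0 < s := Real.sqrt_pos.2 (by positivity)
    have hinv : Real.sqrt (A j j / A i i) = 1 / s := by
      rw [hs, one_div, ← Real.sqrt_inv]
      congr 1
      field_simp
    simp only [hf, hji, hinv, ← hs]
    have habs : v i * (A i j * v j) ≤ |A i j| * (|v i| * |v j|) := by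
      calc v i * (A i j * v j) ≤ |v i * (A i j * v j)| := le_abs_self _
        _ = |A i j| * (|v i| * |v j|) := by rw [abs_mul, abs_mul]; ring
    have hgm : 2 * s * (|v i| * |v j|) ≤ s ^ 2 * (v i * v i) + v j * v j := by
      nlinarith [sq_nonneg (s * |v i| - |v j|), sq_abs (v i), sq_abs (v j),
        abs_nonneg (v i), abs_nonneg (v j)]
    have hAnn : 0 ≤ |A i j| := abs_nonneg _
    rw [le_div_iff₀ (by norm_num : (0:ℝ) < 2)]
    have := mul_le_mul_of_nonneg_left hgm hAnn
    calc v i * (A i j * v j) * 2 ≤ |A i j| * (|v i| * |v j|) * 2 := by nlinarith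
      _ ≤ |A i j| * (s * (v i * v i) + (1 / s) * (v j * v j)) := by
          rw [← sub_nonneg]
          have h1 : |A i j| * (s * (v i * v i) + (1 / s) * (v j * v j))
              - |A i j| * (|v i| * |v j|) * 2
              = (|A i j| / s) * ((s ^ 2 * (v i * v i) + v j * v j)
                - 2 * s * (|v i| * |v j|)) := by
            field_simp
          rw [h1]
          exact mul_nonneg (by positivity) (by linarith)
      _ = (|A i j| * s * (v i * v i) + |A i j| * (1 / s) * (v j * v j)) := by ring
  have hL : v ⬝ᵥ A.mulVec v = ∑ i, ∑ j, v i * (A i j * v j) := by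
    simp [dotProduct, Matrix.mulVec, Finset.mul_sum]
  have hR : v ⬝ᵥ (Matrix.diagonal (fun i =>
      ∑ j, |A i j| * Real.sqrt (A i i / A j j))).mulVec v = ∑ i, ∑ j, f i j := by
    simp only [dotProduct, Matrix.mulVec_diagonal, hf]
    refine Finset.sum_congr rfl fun i _ => ?_
    rw [Finset.sum_mul, Finset.mul_sum]
    refine Finset.sum_congr rfl fun j _ => by ring
  rw [hL, hR]
  calc ∑ i, ∑ j, v i * (A i j * v j) ≤ ∑ i, ∑ j, (f i j + f j i) / 2 :=
        Finset.sum_le_sum fun i _ => Finset.sum_le_sum fun j _ => key i j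
    _ = ((∑ i, ∑ j, f i j) + (∑ i, ∑ j, f j i)) / 2 := by
        simp only [← Finset.sum_add_distrib, ← Finset.sum_div]
    _ = ∑ i, ∑ j, f i j := by
        rw [show (∑ i, ∑ j, f j i) = ∑ i, ∑ j, f i j from Finset.sum_comm]
        ring
end
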